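/- Let A and B be sets of n-dimensional dyadic boxes satisfying: (i) the universal box ⟨λ,…,λ⟩ does not belong to B; (ii) whenever two boxes of B are geometrically resolvable, their resolvent is contained in some box of A; (iii) no box of B is geometrically resolvable with any box derivable from A (in particular, with any box of A). Then r(A ∪ B) = r(A), where r(·) denotes the minimum number of resolution steps in a geometric resolution derivation containing the universal box ⟨λ,…,λ⟩ (and r(·) = ∞ if no such derivation exists). -/

import Mathlib

/-- An `n`-dimensional dyadic box: each component is a binary string (a dyadic
interval), the empty string denoting the whole domain `{0,1}^d`. -/
abbrev DyadicBox (n : ℕ) := Fin n → List Bool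

namespace DyadicBox

/-- `b'` contains `b` iff every component of `b'` is a prefix of the
corresponding component of `b`. -/
def Contains {n : ℕ} (b' b : DyadicBox n) : Prop := ∀ i, b' i <+: b i

/-- A point at bit depth `d`: every component has length exactly `d`. -/
def IsPoint {n : ℕ} (d : ℕ) (p : DyadicBox n) : Prop := ∀ i, (p i).length = d

/-- A set of boxes `A` covers a box `b` at bit depth `d`: every point lying in
`b` lies in some box of `A`. -/
def Covers {n : ℕ} (d : ℕ) (A : Set (DyadicBox n)) (b : DyadicBox n) : Prop :=
  ∀ p : DyadicBox n, IsPoint d p → Contains b p → ∃ a ∈ A, Contains a p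

/-- `w` is the geometric resolvent of `w₁` and `w₂` on coordinate `ℓ`:
the `ℓ`-th components are `x0` and `x1` and become `x`, and every other
component of `w` is the longer of the two (prefix-comparable) components. -/
def IsResolvent {n : ℕ} (w₁ w₂ : DyadicBox n) (ℓ : Fin n) (w : DyadicBox n) : Prop :=
  (∃ x : List Bool, w₁ ℓ = x ++ [false] ∧ w₂ ℓ = x ++ [true] ∧ w ℓ = x) ∧
  ∀ j : Fin n, j ≠ ℓ →
    (w₁ j <+: w₂ j ∧ w j = w₂ j) ∨ (w₂ j <+: w₁ j ∧ w j = w₁ j)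

/-- A (tagged) geometric resolution derivation from `A`: an entry tagged `true`
is the geometric resolvent of two earlier entries; an entry tagged `false` is
an axiom, i.e. belongs to `A`. -/
def IsDerivation {n : ℕ} (A : Set (DyadicBox n)) (L : List (Bool × DyadicBox n)) : Prop :=
  ∀ k : Fin L.length,
    if (L.get k).1 then
      ∃ i j : Fin L.length, (i : ℕ) < (k : ℕ) ∧ (j : ℕ) < (k : ℕ) ∧
        ∃ ℓ : Fin n, IsResolvent ((L.get i).2) ((L.get j).2) ℓ ((L.get k).2)
    else (L.get k).2 ∈ A

/-- The number of resolution steps of a derivation. -/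
def steps {n : ℕ} (L : List (Bool × DyadicBox n)) : ℕ := (L.filter (·.1)).length

/-- `z` is derivable from `A` by geometric resolutions: it occurs in some
geometric resolution derivation from `A`. -/
def Derivable {n : ℕ} (A : Set (DyadicBox n)) (z : DyadicBox n) : Prop :=
  ∃ L : List (Bool × DyadicBox n), IsDerivation A L ∧ z ∈ L.map (·.2)

end DyadicBox

/-- The minimum number of resolution steps of a geometric resolution derivation
from `A` containing the universal box `⟨λ,…,λ⟩`, or `⊤` if there is none. -/
noncomputable def resNum (n : ℕ) (A : Set (DyadicBox n)) : ℕ∞ :=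
  sInf ((fun L => ((DyadicBox.steps L : ℕ) : ℕ∞)) ''
    {L : List (Bool × DyadicBox n) |
      DyadicBox.IsDerivation A L ∧ (fun _ : Fin n => ([] : List Bool)) ∈ L.map (·.2)})

/-!
A derivation from `A ∪ B` is replayed step by step as a derivation from `A`, keeping the
invariant that every box derived so far lies in `B` or in some box derived from `A`.
Resolution is monotone under containment: a resolvent of subboxes of `z₁` and `z₂` lies in
`z₁`, in `z₂`, or in a resolvent of `z₁` and `z₂` on the same coordinate. Hence a resolution
step between boxes covered on the `A` side costs at most one resolution step, a resolution of
two boxes of `B` is absorbed by an axiom of `A` by (ii), and the resolvent of a box of `B` with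
a box covered by `z` lies in `z`, since lifting it would resolve a box of `B` with `z`, against
(iii). By (i) the universal box is covered on the `A` side, and a box containing it is the
universal box itself.
-/

namespace DyadicBox

variable {n : ℕ}

theorem Contains.refl (b : DyadicBox n) : Contains b b := fun _ => List.prefix_refl _

theorem Contains.trans {a b c : DyadicBox n} (hab : Contains a b) (hbc : Contains b c) :
    Contains a c :=
  fun i => (hab i).trans (hbc i)

theorem eq_of_contains_nil {z : DyadicBox n} (h : Contains z fun _ => []) : z = fun _ => [] :=
  funext fun i => List.prefix_nil.mp (h i)

namespace IsResolvent

variable {w₁ w₂ w : DyadicBox n} {ℓ : Fin n}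

theorem left_prefix (h : IsResolvent w₁ w₂ ℓ w) {j : Fin n} (hj : j ≠ ℓ) : w₁ j <+: w j := by
  rcases h.2 j hj with ⟨hp, he⟩ | ⟨-, he⟩
  · exact he ▸ hp
  · exact he ▸ List.prefix_refl _

theorem right_prefix (h : IsResolvent w₁ w₂ ℓ w) {j : Fin n} (hj : j ≠ ℓ) : w₂ j <+: w j := by
  rcases h.2 j hj with ⟨-, he⟩ | ⟨hp, he⟩
  · exact he ▸ List.prefix_refl _
  · exact he ▸ hp

theorem not_contains_left (h : IsResolvent w₁ w₂ ℓ w) : ¬ Contains w₁ w := by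
  obtain ⟨x, h₁, -, h₃⟩ := h.1
  intro hc
  simpa [h₁, h₃] using (hc ℓ).length_le

theorem not_contains_right (h : IsResolvent w₁ w₂ ℓ w) : ¬ Contains w₂ w := by
  obtain ⟨x, -, h₂, h₃⟩ := h.1
  intro hc
  simpa [h₂, h₃] using (hc ℓ).length_le

theorem contains_of_contains_left {z : DyadicBox n} (h : IsResolvent w₁ w₂ ℓ w)
    (hz : Contains z w₁) (hℓ : z ℓ <+: w ℓ) : Contains z w := by
  intro j
  by_cases hj : j = ℓ
  · exact hj ▸ hℓ
  · exact (hz j).trans (h.left_prefix hj)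

theorem contains_of_contains_right {z : DyadicBox n} (h : IsResolvent w₁ w₂ ℓ w)
    (hz : Contains z w₂) (hℓ : z ℓ <+: w ℓ) : Contains z w := by
  intro j
  by_cases hj : j = ℓ
  · exact hj ▸ hℓ
  · exact (hz j).trans (h.right_prefix hj)

end IsResolvent

theorem exists_isResolvent_contains {z₁ z₂ w : DyadicBox n} {ℓ : Fin n} {x : List Bool}
    (h₁ : z₁ ℓ = x ++ [false]) (h₂ : z₂ ℓ = x ++ [true]) (hw : w ℓ = x)
    (hj : ∀ j ≠ ℓ, z₁ j <+: w j ∧ z₂ j <+: w j) :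
    ∃ u, IsResolvent z₁ z₂ ℓ u ∧ Contains u w := by
  classical
  refine ⟨fun j => if j = ℓ then x else if z₁ j <+: z₂ j then z₂ j else z₁ j,
    ⟨⟨x, h₁, h₂, if_pos rfl⟩, fun j hj' => ?_⟩, fun j => ?_⟩
  · by_cases hc : z₁ j <+: z₂ j
    · exact Or.inl ⟨hc, by simp [hj', hc]⟩
    · have hc' := (List.prefix_or_prefix_of_prefix (hj j hj').1 (hj j hj').2).resolve_left hc
      exact Or.inr ⟨hc', by simp [hj', hc]⟩
  · by_cases hj' : j = ℓ
    · simp [hj', hw]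
    · simp only [hj', if_false]
      split_ifs
      exacts [(hj j hj').2, (hj j hj').1]

theorem IsResolvent.contains_or_exists_isResolvent {z₁ z₂ w₁ w₂ w : DyadicBox n} {ℓ : Fin n}
    (h : IsResolvent w₁ w₂ ℓ w) (hz₁ : Contains z₁ w₁) (hz₂ : Contains z₂ w₂) :
    Contains z₁ w ∨ Contains z₂ w ∨ ∃ u, IsResolvent z₁ z₂ ℓ u ∧ Contains u w := by
  obtain ⟨x, h₁, h₂, h₃⟩ := h.1
  rcases List.prefix_concat_iff.1 (h₁ ▸ hz₁ ℓ) with e₁ | p₁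
  · rcases List.prefix_concat_iff.1 (h₂ ▸ hz₂ ℓ) with e₂ | p₂
    · exact Or.inr <| Or.inr <| exists_isResolvent_contains e₁ e₂ h₃ fun j hj =>
        ⟨(hz₁ j).trans (h.left_prefix hj), (hz₂ j).trans (h.right_prefix hj)⟩
    · exact Or.inr <| Or.inl <| h.contains_of_contains_right hz₂ (h₃ ▸ p₂)
  · exact Or.inl <| h.contains_of_contains_left hz₁ (h₃ ▸ p₁)

def Follows (S : Set (DyadicBox n)) (L : List (Bool × DyadicBox n)) (e : Bool × DyadicBox n) :
    Prop :=
  if e.1 then ∃ w₁ ∈ L.map (·.2), ∃ w₂ ∈ L.map (·.2), ∃ ℓ, IsResolvent w₁ w₂ ℓ e.2 else e.2 ∈ S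

theorem _root_.List.mem_map_snd_take {α β : Type*} {L : List (α × β)} {k : ℕ} {w : β} :
    w ∈ (L.take k).map (·.2) ↔ ∃ i : Fin L.length, (i : ℕ) < k ∧ (L.get i).2 = w := by
  simp only [List.mem_map, List.mem_take_iff_getElem, lt_min_iff]
  constructor
  · rintro ⟨_, ⟨i, ⟨hik, hi⟩, rfl⟩, rfl⟩
    exact ⟨⟨i, hi⟩, hik, rfl⟩
  · rintro ⟨i, hik, rfl⟩
    exact ⟨_, ⟨i, ⟨hik, i.isLt⟩, rfl⟩, rfl⟩

theorem isDerivation_iff_follows_take {S : Set (DyadicBox n)} {L : List (Bool × DyadicBox n)} :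
    IsDerivation S L ↔ ∀ k (hk : k < L.length), Follows S (L.take k) L[k] := by
  refine Fin.forall_iff.trans <| forall₂_congr fun k hk => ?_
  simp only [Follows, List.get_eq_getElem]
  split_ifs
  · constructor
    · rintro ⟨i, j, hi, hj, ℓ, h⟩
      exact ⟨_, List.mem_map_snd_take.2 ⟨i, hi, rfl⟩, _, List.mem_map_snd_take.2 ⟨j, hj, rfl⟩,
        ℓ, h⟩
    · rintro ⟨_, hw₁, _, hw₂, ℓ, h⟩
      obtain ⟨i, hi, rfl⟩ := List.mem_map_snd_take.1 hw₁
      obtain ⟨j, hj, rfl⟩ := List.mem_map_snd_take.1 hw₂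
      exact ⟨i, j, hi, hj, ℓ, h⟩
  · rfl

theorem isDerivation_append_singleton_iff {S : Set (DyadicBox n)}
    {L : List (Bool × DyadicBox n)} {e : Bool × DyadicBox n} :
    IsDerivation S (L ++ [e]) ↔ IsDerivation S L ∧ Follows S L e := by
  simp only [isDerivation_iff_follows_take]
  constructor
  · intro h
    refine ⟨fun k hk => ?_, by simpa using h L.length (by simp)⟩
    have := h k (by simp; omega)
    rwa [List.take_append_of_le_length hk.le, List.getElem_append_left hk] at this
  · rintro ⟨hL, he⟩ k hk
    rcases (Nat.lt_succ_iff_lt_or_eq.1 (by simpa using hk)) with hk | rfl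
    · simpa [List.take_append_of_le_length hk.le, List.getElem_append_left hk] using hL k hk
    · simpa using he

theorem IsDerivation.mono {S T : Set (DyadicBox n)} (hST : S ⊆ T) {L : List (Bool × DyadicBox n)}
    (h : IsDerivation S L) : IsDerivation T L := by
  intro k
  have hk := h k
  split_ifs at hk ⊢
  exacts [hk, hST hk]

theorem steps_append_singleton (L : List (Bool × DyadicBox n)) (e : Bool × DyadicBox n) :
    steps (L ++ [e]) = steps L + e.1.toNat := by
  obtain ⟨_ | _, _⟩ := e <;> simp [steps]

def Subsumes (M : List (Bool × DyadicBox n)) (w : DyadicBox n) : Prop :=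
  ∃ z ∈ M.map (·.2), Contains z w

theorem Subsumes.append {M : List (Bool × DyadicBox n)} {w : DyadicBox n} (h : Subsumes M w)
    (M' : List (Bool × DyadicBox n)) : Subsumes (M ++ M') w := by
  obtain ⟨z, hz, hzw⟩ := h
  exact ⟨z, by simp [hz], hzw⟩

theorem subsumes_append_singleton (M : List (Bool × DyadicBox n)) (e : Bool × DyadicBox n)
    {w : DyadicBox n} (h : Contains e.2 w) : Subsumes (M ++ [e]) w :=
  ⟨e.2, by simp, h⟩

section Union

variable {A B : Set (DyadicBox n)}

theorem IsResolvent.subsumes_or_exists_follows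
    (hBB : ∀ b₁ ∈ B, ∀ b₂ ∈ B, ∀ ℓ w, IsResolvent b₁ b₂ ℓ w → ∃ a ∈ A, Contains a w)
    (hBA : ∀ b ∈ B, ∀ z, Derivable A z → ∀ ℓ w, ¬ IsResolvent b z ℓ w ∧ ¬ IsResolvent z b ℓ w)
    {M : List (Bool × DyadicBox n)} (hM : IsDerivation A M) {w₁ w₂ w : DyadicBox n} {ℓ : Fin n}
    (h : IsResolvent w₁ w₂ ℓ w) (h₁ : w₁ ∈ B ∨ Subsumes M w₁) (h₂ : w₂ ∈ B ∨ Subsumes M w₂) :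
    Subsumes M w ∨ ∃ e, Follows A M e ∧ Contains e.2 w := by
  rcases h₁ with hb₁ | ⟨z₁, hz₁, hc₁⟩ <;> rcases h₂ with hb₂ | ⟨z₂, hz₂, hc₂⟩
  · obtain ⟨a, ha, haw⟩ := hBB w₁ hb₁ w₂ hb₂ ℓ w h
    exact Or.inr ⟨(false, a), by simpa [Follows] using ha, haw⟩
  · rcases h.contains_or_exists_isResolvent (Contains.refl w₁) hc₂ with hc | hc | ⟨u, hu, -⟩
    · exact absurd hc h.not_contains_left
    · exact Or.inl ⟨z₂, hz₂, hc⟩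
    · exact absurd hu (hBA w₁ hb₁ z₂ ⟨M, hM, hz₂⟩ ℓ u).1
  · rcases h.contains_or_exists_isResolvent hc₁ (Contains.refl w₂) with hc | hc | ⟨u, hu, -⟩
    · exact Or.inl ⟨z₁, hz₁, hc⟩
    · exact absurd hc h.not_contains_right
    · exact absurd hu (hBA w₂ hb₂ z₁ ⟨M, hM, hz₁⟩ ℓ u).2
  · rcases h.contains_or_exists_isResolvent hc₁ hc₂ with hc | hc | ⟨u, hu, huw⟩
    · exact Or.inl ⟨z₁, hz₁, hc⟩
    · exact Or.inl ⟨z₂, hz₂, hc⟩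
    · exact Or.inr ⟨(true, u), ⟨z₁, hz₁, z₂, hz₂, ℓ, hu⟩, huw⟩

theorem Follows.of_union
    (hBB : ∀ b₁ ∈ B, ∀ b₂ ∈ B, ∀ ℓ w, IsResolvent b₁ b₂ ℓ w → ∃ a ∈ A, Contains a w)
    (hBA : ∀ b ∈ B, ∀ z, Derivable A z → ∀ ℓ w, ¬ IsResolvent b z ℓ w ∧ ¬ IsResolvent z b ℓ w)
    {L M : List (Bool × DyadicBox n)} (hM : IsDerivation A M)
    (hLM : ∀ w ∈ L.map (·.2), w ∈ B ∨ Subsumes M w) {e : Bool × DyadicBox n}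
    (he : Follows (A ∪ B) L e) :
    (e.2 ∈ B ∨ Subsumes M e.2) ∨ ∃ e', Follows A M e' ∧ e'.1 ≤ e.1 ∧ Contains e'.2 e.2 := by
  obtain ⟨_ | _, w⟩ := e
  · rcases (by simpa [Follows] using he : w ∈ A ∪ B) with hA | hB
    · exact Or.inr ⟨(false, w), by simpa [Follows] using hA, le_rfl, Contains.refl w⟩
    · exact Or.inl (Or.inl hB)
  · obtain ⟨w₁, hw₁, w₂, hw₂, ℓ, h⟩ := (by simpa [Follows] using he :
      ∃ w₁ ∈ L.map (·.2), ∃ w₂ ∈ L.map (·.2), ∃ ℓ, IsResolvent w₁ w₂ ℓ w)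
    rcases h.subsumes_or_exists_follows hBB hBA hM (hLM w₁ hw₁) (hLM w₂ hw₂) with
      hw | ⟨e', he', hc⟩
    · exact Or.inl (Or.inr hw)
    · exact Or.inr ⟨e', he', Bool.le_true _, hc⟩

theorem IsDerivation.exists_of_union
    (hBB : ∀ b₁ ∈ B, ∀ b₂ ∈ B, ∀ ℓ w, IsResolvent b₁ b₂ ℓ w → ∃ a ∈ A, Contains a w)
    (hBA : ∀ b ∈ B, ∀ z, Derivable A z → ∀ ℓ w, ¬ IsResolvent b z ℓ w ∧ ¬ IsResolvent z b ℓ w)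
    {L : List (Bool × DyadicBox n)} (hL : IsDerivation (A ∪ B) L) :
    ∃ M, IsDerivation A M ∧ steps M ≤ steps L ∧ ∀ w ∈ L.map (·.2), w ∈ B ∨ Subsumes M w := by
  induction L using List.reverseRecOn with
  | nil => exact ⟨[], fun k => k.elim0, le_rfl, by simp⟩
  | append_singleton L e ih =>
    rw [isDerivation_append_singleton_iff] at hL
    obtain ⟨M, hM, hsteps, hLM⟩ := ih hL.1
    simp only [steps_append_singleton, List.map_append, List.mem_append, List.map_cons,
      List.map_nil, List.mem_singleton, or_imp, forall_and, forall_eq]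
    rcases hL.2.of_union hBB hBA hM hLM with he | ⟨e', he', htag, hc⟩
    · exact ⟨M, hM, by omega, hLM, he⟩
    · refine ⟨M ++ [e'], isDerivation_append_singleton_iff.2 ⟨hM, he'⟩, ?_,
        fun w hw => (hLM w hw).imp_right (·.append _), Or.inr (subsumes_append_singleton M e' hc)⟩
      rw [steps_append_singleton]
      have := Bool.toNat_le_toNat htag
      omega

end Union

end DyadicBox

open DyadicBox in
theorem resNum_le_resNum {n : ℕ} {S T : Set (DyadicBox n)}
    (h : ∀ L, IsDerivation S L → (fun _ => []) ∈ L.map (·.2) →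
      ∃ M, IsDerivation T M ∧ (fun _ => []) ∈ M.map (·.2) ∧ steps M ≤ steps L) :
    resNum n T ≤ resNum n S := by
  refine le_sInf ?_
  rintro _ ⟨L, ⟨hL, huniv⟩, rfl⟩
  obtain ⟨M, hM, hMuniv, hsteps⟩ := h L hL huniv
  exact le_trans (sInf_le ⟨M, ⟨hM, hMuniv⟩, rfl⟩) (ENat.natCast_le_natCast.2 hsteps)

/-- If (i) the universal box is not in `B`, (ii) every resolvent of two boxes of
`B` is contained in some box of `A`, and (iii) no box of `B` is resolvable with
any box derivable from `A`, then `r(A ∪ B) = r(A)`. -/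
theorem resNum_union_eq (n : ℕ) (A B : Set (DyadicBox n))
    (hB : (fun _ : Fin n => ([] : List Bool)) ∉ B)
    (hBB : ∀ b₁ ∈ B, ∀ b₂ ∈ B, ∀ (ℓ : Fin n) (w : DyadicBox n),
      DyadicBox.IsResolvent b₁ b₂ ℓ w → ∃ a ∈ A, DyadicBox.Contains a w)
    (hBA : ∀ b ∈ B, ∀ z : DyadicBox n, DyadicBox.Derivable A z →
      ∀ (ℓ : Fin n) (w : DyadicBox n),
        ¬ DyadicBox.IsResolvent b z ℓ w ∧ ¬ DyadicBox.IsResolvent z b ℓ w) :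
    resNum n (A ∪ B) = resNum n A := by
  refine le_antisymm (resNum_le_resNum fun L hL huniv =>
    ⟨L, hL.mono Set.subset_union_left, huniv, le_rfl⟩) (resNum_le_resNum fun L hL huniv => ?_)
  obtain ⟨M, hM, hsteps, hLM⟩ := hL.exists_of_union hBB hBA
  obtain ⟨z, hz, hzu⟩ := (hLM _ huniv).resolve_left hB
  exact ⟨M, hM, DyadicBox.eq_of_contains_nil hzu ▸ hz, hsteps⟩
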